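/- Fix β > 0. Let B be a critical block (ℓ(B) ≥ (1+β)s(B), and every proper sub-block B' has ℓ(B') < (1+β)s(B')) of a flip sequence on K_n with s(B) < n, not revisiting any state. Then rank(A_B) ≥ s(B) + (β/(1+β))·s₁(B), and consequently rank(A_B) ≥ ((1+4β)/(1+3β))·s(B). -/

import Mathlib

open Matrix

/-- Flip the spin of vertex `v`. -/
def flipSpin {n : ℕ} (v : Fin n) (σ : Fin n → ℝ) : Fin n → ℝ :=
  fun u => if u = v then -σ u else σ u

/-- The spin configuration obtained from `σ₀` by flipping the vertices of `L` in order. -/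
def evolve {n : ℕ} (σ₀ : Fin n → ℝ) : List (Fin n) → (Fin n → ℝ)
  | [] => σ₀
  | v :: L => evolve (flipSpin v σ₀) L

/-- A spin configuration takes values in `{-1, 1}`. -/
def isSpin {n : ℕ} (σ : Fin n → ℝ) : Prop := ∀ v, σ v = 1 ∨ σ v = -1

/-- The move matrix of a flip sequence `L` from initial configuration `σ₀` on the complete
graph: the `t`-th column is the vector `α_t` of coefficients of the change of the
Hamiltonian at step `t`, i.e. `(α_t)_{u v_t} = σ_{t-1}(v_t) σ_{t-1}(u)` for `u ≠ v_t` and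
`(α_t)_e = 0` for edges `e` not incident to `v_t`.  (Rows are indexed by ordered pairs;
each edge appears as two equal rows, which does not affect the rank.) -/
def moveMatrix {n : ℕ} (σ₀ : Fin n → ℝ) (L : List (Fin n)) :
    Matrix (Fin n × Fin n) (Fin L.length) ℝ :=
  fun e t =>
    if e.1 = L.get t ∧ e.2 ≠ L.get t then
      evolve σ₀ (L.take t.1) (L.get t) * evolve σ₀ (L.take t.1) e.2
    else if e.2 = L.get t ∧ e.1 ≠ L.get t then
      evolve σ₀ (L.take t.1) (L.get t) * evolve σ₀ (L.take t.1) e.1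
    else 0

/-- `s(L)`: the number of distinct vertices appearing in `L`. -/
def sDist {n : ℕ} (L : List (Fin n)) : ℕ := L.toFinset.card

/-- `s₂(L)`: the number of repeated vertices (appearing at least twice) in `L`. -/
def sRep {n : ℕ} (L : List (Fin n)) : ℕ :=
  (L.toFinset.filter fun v => 2 ≤ L.count v).card

/-- `s₁(L)`: the number of singletons (vertices appearing exactly once) in `L`. -/
def sSing {n : ℕ} (L : List (Fin n)) : ℕ :=
  (L.toFinset.filter fun v => L.count v = 1).card

/-- The block `L[i+1, j]` (0-indexed: positions `i, …, j-1`). -/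
def seg {n : ℕ} (L : List (Fin n)) (i j : ℕ) : List (Fin n) := (L.take j).drop i

/-- `L` does not revisit any state: no (nonempty) contiguous block of `L` contains every
vertex an even number of times. -/
def noRevisit {n : ℕ} (L : List (Fin n)) : Prop :=
  ∀ i j : ℕ, i < j → j ≤ L.length → ∃ v, ¬ Even ((seg L i j).count v)

/-- A (nonempty) block `B` is `β`-critical if `ℓ(B) ≥ (1+β) s(B)` and every (nonempty)
block strictly contained in `B` satisfies `ℓ(B') < (1+β) s(B')`. -/
def Critical {n : ℕ} (β : ℝ) (B : List (Fin n)) : Prop :=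
  B ≠ [] ∧ ((1 + β) * (sDist B : ℝ) ≤ (B.length : ℝ)) ∧
    ∀ i j : ℕ, seg B i j ≠ [] → (seg B i j).length < B.length →
      ((seg B i j).length : ℝ) < (1 + β) * (sDist (seg B i j) : ℝ)

/-!
Both bounds come from explicit sets of linearly independent columns of `A_B`. Since
`s(B) < n` there is a vertex `w₀` that is never flipped; in the row `(x, w₀)` only the columns
of the flips of `x` survive, and in a row `(x, y)` the columns of `x` carry the sign of the spin
of `y` at that time.

For the first bound take every singleton flip and, inside each transition block (a maximal
stretch between singletons), the first flip of every vertex. Two chosen flips of the same vertex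
are separated by a singleton, and the rows `(v, y)` with `y` the next singleton form a triangular
`±1` system. Every transition block is a proper sub-block of the critical block `B`, so
`ℓ(B) ≤ s₁ + (1+β) k` where `k` is the number of chosen non-singleton columns; together with
`ℓ(B) ≥ (1+β) s(B)` this gives `rank ≥ s + (β/(1+β)) s₁`.

For the second bound take the first flip of every vertex and the second flip of each `v` in a
set `S` of repeated vertices. As no state is revisited, some `u ≠ v` flips an odd number of times
between the first two flips of `v`, and the rows `(v, w₀)`, `(v, u)` force both coefficients of
`v` to vanish once those of `u` do. Both `S = {v | u(v) < v}` and `S = {v | v < u(v)}` allow a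
well-founded induction, and together they contain all `s₂` repeated vertices, so
`2 rank ≥ 2s + s₂`. The corollary is `(1+β)·(first) + 2β·(second)`.
-/

open scoped Finset

theorem Matrix.card_le_rank_of_linearIndepOn {m ι R : Type*} [Fintype ι] [Field R]
    {A : Matrix m ι R} {K : Finset ι} (h : LinearIndepOn R A.col (K : Set ι)) :
    #K ≤ A.rank := by
  have := Module.Finite.span_of_finite R (Set.finite_range A.col)
  have hK := finrank_span_eq_card h
  simp only [Finset.coe_sort_coe, Fintype.card_coe] at hK
  rw [rank_eq_finrank_span_cols, ← hK]
  exact Submodule.finrank_mono (Submodule.span_mono (Set.range_comp_subset_range _ _))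

theorem Finset.eq_zero_of_sum_mul_sign_eq_zero {α : Type*} [LinearOrder α] [WellFoundedLT α]
    {T : Finset α} {μ : α → ℝ}
    (h : ∀ i ∈ T, ∑ j ∈ T, μ j * (if j ≤ i then 1 else -1) = 0) :
    ∀ i ∈ T, μ i = 0 := by
  have hsplit : ∀ i, ∑ j ∈ T, μ j * (if j ≤ i then 1 else -1) =
      2 * ∑ j ∈ T with j ≤ i, μ j - ∑ j ∈ T, μ j := by
    intro i
    rw [sum_filter, mul_sum, ← sum_sub_distrib]
    refine sum_congr rfl fun j _ => ?_
    split_ifs <;> ring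
  have hprefix : ∀ i ∈ T, ∑ j ∈ T with j ≤ i, μ j = 0 := by
    intro i hi
    have hT : T.Nonempty := ⟨i, hi⟩
    have htotal : ∑ j ∈ T, μ j = 0 := by
      have := h _ (T.max'_mem hT)
      rw [hsplit, filter_true_of_mem fun j hj => T.le_max' j hj] at this
      linarith
    linarith [h i hi, hsplit i]
  intro i
  induction i using WellFoundedLT.induction with
  | _ i ih =>
    intro hi
    have hinsert : T.filter (· ≤ i) = insert i (T.filter (· < i)) := by
      ext j
      simp only [mem_filter, mem_insert, le_iff_lt_or_eq]
      constructor
      · rintro ⟨hj, hji | rfl⟩ <;> simp_all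
      · rintro (rfl | ⟨hj, hji⟩) <;> simp_all
    have hlower : ∑ j ∈ T with j < i, μ j = 0 :=
      sum_eq_zero fun j hj => ih j (mem_filter.mp hj).2 (mem_filter.mp hj).1
    have := hprefix i hi
    rwa [hinsert, sum_insert (by simp), hlower, add_zero] at this

theorem Finset.card_filter_le_eq_add {ι : Type*} (s : Finset ι) (f : ι → ℕ) {i q : ℕ}
    (hiq : i ≤ q) :
    #{t ∈ s | i ≤ f t} = #{t ∈ s | i ≤ f t ∧ f t < q} + #{t ∈ s | q ≤ f t} := by
  rw [← card_filter_add_card_filter_not (s := {t ∈ s | i ≤ f t}) (f · < q),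
    filter_filter, filter_filter]
  congr 2
  exact filter_congr fun t _ => by omega

theorem Fin.card_filter_le_eq_add_one {ℓ : ℕ} {s : Finset (Fin ℓ)} {q : Fin ℓ}
    (hq : q ∈ s) :
    #(s.filter fun t : Fin ℓ => (q : ℕ) ≤ t) =
      #(s.filter fun t : Fin ℓ => (q : ℕ) + 1 ≤ t) + 1 := by
  rw [← Finset.card_insert_of_notMem (s := s.filter fun t : Fin ℓ => (q : ℕ) + 1 ≤ t)
    (a := q) (by simp)]
  congr 1
  ext t
  simp only [Finset.mem_filter, Finset.mem_insert, Fin.ext_iff]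
  constructor
  · rintro ⟨hs, h⟩
    rcases h.eq_or_lt with h | h
    exacts [Or.inl h.symm, Or.inr ⟨hs, h⟩]
  · rintro (h | ⟨hs, h⟩)
    exacts [⟨Fin.ext h ▸ hq, h.ge⟩, ⟨hs, by omega⟩]

namespace List

variable {α : Type*} [DecidableEq α] (L : List α)

def occurrenceIndex (t : Fin L.length) : ℕ := (L.take t).count (L.get t)

theorem count_take_le_count_take {i j : ℕ} (h : i ≤ j) (v : α) :
    (L.take i).count v ≤ (L.take j).count v :=
  (take_prefix_take_left h).count_le v

theorem count_take_succ (t : Fin L.length) (v : α) :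
    (L.take (t + 1)).count v = (L.take t).count v + if L.get t = v then 1 else 0 := by
  rw [take_succ_eq_append_getElem t.2, count_append, count_singleton]
  simp [beq_iff_eq]

theorem occurrenceIndex_lt_count_take {t : Fin L.length} {j : ℕ} (h : (t : ℕ) < j) :
    L.occurrenceIndex t < (L.take j).count (L.get t) := by
  have := L.count_take_le_count_take (Nat.succ_le_of_lt h) (L.get t)
  rw [count_take_succ, if_pos rfl] at this
  exact this

theorem occurrenceIndex_lt_count (t : Fin L.length) :
    L.occurrenceIndex t < L.count (L.get t) := by
  simpa using L.occurrenceIndex_lt_count_take t.2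

theorem occurrenceIndex_lt_of_lt {t t' : Fin L.length} (h : t < t')
    (he : L.get t = L.get t') : L.occurrenceIndex t < L.occurrenceIndex t' := by
  have := L.occurrenceIndex_lt_count_take (t := t) h
  rwa [he] at this

theorem eq_of_occurrenceIndex_eq {t t' : Fin L.length} (he : L.get t = L.get t')
    (hi : L.occurrenceIndex t = L.occurrenceIndex t') : t = t' := by
  rcases lt_trichotomy t t' with h | h | h
  · exact absurd hi (L.occurrenceIndex_lt_of_lt h he).ne
  · exact h
  · exact absurd hi (L.occurrenceIndex_lt_of_lt h he.symm).ne'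

theorem eq_of_get_eq_of_count_eq_one {q t : Fin L.length} (hq : L.count (L.get q) = 1)
    (h : L.get t = L.get q) : t = q := by
  have := L.occurrenceIndex_lt_count t
  have := L.occurrenceIndex_lt_count q
  exact L.eq_of_occurrenceIndex_eq h (by rw [h] at *; omega)

theorem exists_occurrenceIndex_eq :
    ∀ {L : List α} {v : α} {k : ℕ}, k < L.count v →
      ∃ t, L.get t = v ∧ L.occurrenceIndex t = k
  | x :: L, v, k, hk => by
    by_cases hx : x = v
    · subst hx
      cases k with
      | zero => exact ⟨⟨0, by simp⟩, rfl, by simp [occurrenceIndex]⟩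
      | succ k =>
        obtain ⟨t, ht, hkt⟩ := exists_occurrenceIndex_eq (L := L) (v := x) (k := k)
          (by simpa using hk)
        simp only [get_eq_getElem] at ht
        exact ⟨t.succ, ht, by simp_all [occurrenceIndex]⟩
    · obtain ⟨t, ht, hkt⟩ := exists_occurrenceIndex_eq (L := L) (v := v) (k := k)
        (by simpa [count_cons, hx] using hk)
      simp only [get_eq_getElem] at ht
      exact ⟨t.succ, ht, by simp_all [occurrenceIndex]⟩

theorem count_take_of_count_eq_one {q : Fin L.length} (hq : L.count (L.get q) = 1) (j : ℕ) :
    (L.take j).count (L.get q) = if (q : ℕ) < j then 1 else 0 := by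
  have h0 : L.occurrenceIndex q = 0 := by have := L.occurrenceIndex_lt_count q; omega
  have hle := (take_sublist j L).count_le (L.get q)
  split_ifs with h
  · have := L.occurrenceIndex_lt_count_take h; omega
  · have := L.count_take_le_count_take (not_lt.mp h) (L.get q)
    rw [← occurrenceIndex, h0] at this; omega

theorem card_filter_occurrenceIndex_eq (k : ℕ) (P : α → Prop) [DecidablePred P] :
    #{t | L.occurrenceIndex t = k ∧ P (L.get t)} =
      #(L.toFinset.filter fun v => k < L.count v ∧ P v) := by
  refine Finset.card_nbij (fun t => L.get t) ?_ ?_ ?_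
  · intro t ht
    simp only [Finset.coe_filter, Finset.mem_univ, true_and, Set.mem_ofPred_eq] at ht
    simp only [Finset.coe_filter, mem_toFinset, Set.mem_ofPred_eq]
    exact ⟨get_mem L t, ht.1 ▸ L.occurrenceIndex_lt_count t, ht.2⟩
  · intro t ht t' ht' he
    simp only [Finset.coe_filter, Finset.mem_univ, true_and, Set.mem_ofPred_eq] at ht ht'
    exact L.eq_of_occurrenceIndex_eq he (ht.1.trans ht'.1.symm)
  · intro v hv
    simp only [Finset.coe_filter, mem_toFinset, Set.mem_ofPred_eq] at hv
    obtain ⟨t, ht, hk⟩ := exists_occurrenceIndex_eq hv.2.1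
    refine ⟨t, ?_, ht⟩
    simp only [Finset.coe_filter, Finset.mem_univ, true_and, Set.mem_ofPred_eq]
    exact ⟨hk, ht ▸ hv.2.2⟩

theorem card_firstOccurrences :
    #({t | L.occurrenceIndex t = 0} : Finset (Fin L.length)) = #L.toFinset := by
  have h := L.card_filter_occurrenceIndex_eq 0 fun _ => True
  simp only [and_true, count_pos_iff] at h
  rw [h, Finset.filter_true_of_mem fun v hv => mem_toFinset.mp hv]

def singletonPositions : Finset (Fin L.length) := {t | L.count (L.get t) = 1}

theorem card_singletonPositions :
    #L.singletonPositions = #(L.toFinset.filter fun v => L.count v = 1) := by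
  convert L.card_filter_occurrenceIndex_eq 0 (fun v => L.count v = 1) using 2
  · refine Finset.filter_congr fun t _ => ⟨fun h => ⟨?_, h⟩, And.right⟩
    have := L.occurrenceIndex_lt_count t
    omega
  · exact Finset.filter_congr fun v _ => by omega

/-- The singleton positions together with, inside each transition block (a maximal block
without singletons), the first occurrence of every letter. -/
def firstInBlock : Finset (Fin L.length) :=
  {t | ∀ t' < t, L.get t' = L.get t → ∃ q, t' < q ∧ q < t ∧ L.count (L.get q) = 1}

theorem firstOccurrences_subset_firstInBlock :
    ({t | L.occurrenceIndex t = 0} : Finset (Fin L.length)) ⊆ L.firstInBlock := by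
  intro t ht
  refine Finset.mem_filter.mpr ⟨Finset.mem_univ t, fun t' ht't he => ?_⟩
  have := L.occurrenceIndex_lt_of_lt ht't he
  simp_all

def IsBlockStart (i : ℕ) : Prop :=
  i = 0 ∨ ∃ q : Fin L.length, L.count (L.get q) = 1 ∧ i = q + 1

variable {L}

theorem mem_firstInBlock_of_forall_ne {i : ℕ} (hi : L.IsBlockStart i) {t : Fin L.length}
    (hit : i ≤ t) (hfirst : ∀ t' < t, i ≤ t' → L.get t' ≠ L.get t) :
    t ∈ L.firstInBlock := by
  refine Finset.mem_filter.mpr ⟨Finset.mem_univ t, fun t' ht't he => ?_⟩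
  have ht'i : (t' : ℕ) < i := by
    by_contra h
    exact hfirst t' ht't (not_lt.mp h) he
  obtain rfl | ⟨q, hq, rfl⟩ := hi
  · omega
  refine ⟨q, lt_of_le_of_ne (Nat.lt_succ_iff.mp ht'i) fun h => ?_, by omega, hq⟩
  subst h
  exact ht't.ne' (L.eq_of_get_eq_of_count_eq_one hq he.symm)

/-- `y` is the first singleton letter after position `i`, or `w₀` if there is none. -/
theorem exists_separating_letter {w₀ : α} (hw₀ : w₀ ∉ L) {i : Fin L.length}
    (hi : 2 ≤ L.count (L.get i)) :
    ∃ y, y ≠ L.get i ∧ (y = w₀ ∨ L.count y = 1) ∧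
      ∀ j ∈ L.firstInBlock, L.get j = L.get i →
        (L.take j).count y = if j ≤ i then 0 else 1 := by
  by_cases hsing : ∃ q, i < q ∧ L.count (L.get q) = 1
  · obtain ⟨q, hq, hmin⟩ :=
      (Finset.univ.filter fun q => i < q ∧ L.count (L.get q) = 1).exists_min_image id
        (by obtain ⟨q, hq⟩ := hsing; exact ⟨q, by simpa using hq⟩)
    simp only [Finset.mem_filter, Finset.mem_univ, true_and, id] at hq hmin
    refine ⟨L.get q, fun h => by rw [h] at hq; omega, Or.inr hq.2, fun j hj hji => ?_⟩
    rw [L.count_take_of_count_eq_one hq.2]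
    by_cases hij : j ≤ i
    · simp [hij, not_lt.mpr (hij.trans hq.1.le)]
    · obtain ⟨q', hq'i, hq'j, hq'⟩ := (Finset.mem_filter.mp hj).2 i (not_le.mp hij) hji.symm
      simp [hij, (hmin q' ⟨hq'i, hq'⟩).trans_lt hq'j]
  · refine ⟨w₀, fun h => hw₀ (h ▸ L.get_mem i), Or.inl rfl, fun j hj hji => ?_⟩
    have hij : j ≤ i := by
      by_contra hij
      obtain ⟨q', hq'i, -, hq'⟩ := (Finset.mem_filter.mp hj).2 i (not_le.mp hij) hji.symm
      exact hsing ⟨q', hq'i, hq'⟩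
    simp [hij, count_eq_zero.mpr fun h => hw₀ (mem_of_mem_take h)]

variable (L)

/-- `u` is flipped an odd number of times between the first two flips of `v`. -/
def FlipsBetweenFirstTwo (v u : α) : Prop :=
  ∃ a b : Fin L.length, L.get a = v ∧ L.get b = v ∧ L.occurrenceIndex a = 0 ∧
    L.occurrenceIndex b = 1 ∧ (-1 : ℝ) ^ (L.take b).count u = -(-1) ^ (L.take a).count u

def firstTwoOccurrences (S : Finset α) : Finset (Fin L.length) :=
  {t | L.occurrenceIndex t = 0 ∨ (L.occurrenceIndex t = 1 ∧ L.get t ∈ S)}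

theorem card_firstTwoOccurrences {S : Finset α} (hS : ∀ v ∈ S, 2 ≤ L.count v) :
    #(L.firstTwoOccurrences S) = #L.toFinset + #S := by
  rw [firstTwoOccurrences, Finset.filter_or, Finset.card_union_of_disjoint
    (Finset.disjoint_filter.mpr fun t _ h h' => by omega), card_firstOccurrences,
    card_filter_occurrenceIndex_eq]
  congr 1
  refine congrArg Finset.card (Finset.ext fun v => ?_)
  simp only [Finset.mem_filter, mem_toFinset]
  exact ⟨fun h => h.2.2, fun h => ⟨count_pos_iff.mp (by have := hS v h; omega), hS v h, h⟩⟩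

end List

open Finset

section Segments

variable {n : ℕ} (L : List (Fin n))

theorem exists_get_eq_of_mem_seg {i j : ℕ} (hj : j ≤ L.length) {v : Fin n}
    (hv : v ∈ seg L i j) : ∃ t : Fin L.length, i ≤ t ∧ (t : ℕ) < j ∧ L.get t = v := by
  obtain ⟨r, hr, rfl⟩ := List.mem_drop_iff_getElem.mp hv
  simp only [List.length_take] at hr
  exact ⟨⟨r + i, by omega⟩, by simp, by simp; omega, by simp [Nat.add_comm]⟩

theorem count_seg_add_count_take {i j : ℕ} (hij : i ≤ j) (v : Fin n) :
    (seg L i j).count v + (L.take i).count v = (L.take j).count v := by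
  conv_rhs => rw [← List.take_append_drop i (L.take j)]
  rw [List.count_append, List.take_take, min_eq_left hij, seg, add_comm]

end Segments

section MoveMatrix

variable {n : ℕ}

theorem evolve_apply (σ₀ : Fin n → ℝ) (L : List (Fin n)) (u : Fin n) :
    evolve σ₀ L u = (-1) ^ L.count u * σ₀ u := by
  induction L generalizing σ₀ with
  | nil => simp [evolve]
  | cons v L ih =>
    by_cases h : v = u
    · subst h; simp [evolve, ih, flipSpin, pow_succ]
    · simp [evolve, ih, flipSpin, h, Ne.symm h]

theorem moveMatrix_apply_of_ne (σ₀ : Fin n → ℝ) (L : List (Fin n)) {x w : Fin n}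
    (hxw : x ≠ w) (t : Fin L.length) :
    moveMatrix σ₀ L (x, w) t = if L.get t = x ∨ L.get t = w then
      (-1) ^ ((L.take t).count x + (L.take t).count w) * (σ₀ x * σ₀ w) else 0 := by
  unfold moveMatrix
  simp only [evolve_apply, pow_add]
  by_cases hx : L.get t = x
  · rw [if_pos ⟨hx.symm, fun h => hxw (hx.symm.trans h.symm)⟩, if_pos (Or.inl hx), hx]
    ring
  by_cases hw : L.get t = w
  · rw [if_neg fun h => hx h.1.symm, if_pos ⟨hw.symm, fun h => hx h.symm⟩, if_pos (Or.inr hw),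
      hw]
    ring
  rw [if_neg fun h => hx h.1.symm, if_neg fun h => hw h.1.symm, if_neg (by tauto)]

theorem isSpin.ne_zero {σ : Fin n → ℝ} (hσ : isSpin σ) (u : Fin n) : σ u ≠ 0 := by
  rcases hσ u with h | h <;> simp [h]

variable {σ₀ : Fin n → ℝ} {L : List (Fin n)} {K : Finset (Fin L.length)} {c : Fin L.length → ℝ}

theorem sum_sign_eq_zero_of_sum_smul_col_eq_zero (hσ : isSpin σ₀)
    (hc : ∑ t ∈ K, c t • (moveMatrix σ₀ L).col t = 0) {x w : Fin n} (hxw : x ≠ w)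
    (hw : ∀ t ∈ K, L.get t = w → c t = 0) :
    ∑ t ∈ K with L.get t = x, c t * (-1) ^ ((L.take t).count x + (L.take t).count w) = 0 := by
  have hrow := congrFun hc (x, w)
  simp only [Finset.sum_apply, Pi.smul_apply, col_apply, smul_eq_mul, Pi.zero_apply,
    moveMatrix_apply_of_ne σ₀ L hxw, mul_ite, mul_zero, ← sum_filter, filter_or] at hrow
  rw [sum_union (disjoint_filter.mpr fun t _ h h' => hxw (h.symm.trans h')),
    sum_eq_zero (s := K.filter (L.get · = w)) fun t ht => by
      simp [hw t (mem_filter.mp ht).1 (mem_filter.mp ht).2],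
    add_zero] at hrow
  have hfactor : (∑ t ∈ K with L.get t = x,
      c t * (-1) ^ ((L.take t).count x + (L.take t).count w)) * (σ₀ x * σ₀ w) = 0 := by
    simpa only [sum_mul, mul_assoc] using hrow
  exact (mul_eq_zero.mp hfactor).resolve_right (mul_ne_zero (hσ.ne_zero x) (hσ.ne_zero w))

theorem coeff_eq_zero_of_forall_eq (hσ : isSpin σ₀) {w₀ : Fin n} (hw₀ : w₀ ∉ L)
    (hc : ∑ t ∈ K, c t • (moveMatrix σ₀ L).col t = 0) {t : Fin L.length} (ht : t ∈ K)
    (huniq : ∀ t' ∈ K, L.get t' = L.get t → t' = t) : c t = 0 := by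
  have := sum_sign_eq_zero_of_sum_smul_col_eq_zero hσ hc (x := L.get t)
    (fun h : L.get t = w₀ => hw₀ (h ▸ L.get_mem t))
    fun t' _ (h : L.get t' = w₀) => absurd (h ▸ L.get_mem t') hw₀
  rw [sum_eq_single_of_mem (s := K.filter (L.get · = L.get t)) t (mem_filter.mpr ⟨ht, rfl⟩)
    fun t' ht' h => absurd (huniq t' (mem_filter.mp ht').1 (mem_filter.mp ht').2) h] at this
  exact (mul_eq_zero.mp this).resolve_right (pow_ne_zero _ (by norm_num))

end MoveMatrix

section Singletons

variable {n : ℕ} {σ₀ : Fin n → ℝ} {L : List (Fin n)} {c : Fin L.length → ℝ}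

theorem firstInBlock_coeff_eq_zero_of_two_le_count (hσ : isSpin σ₀) {w₀ : Fin n}
    (hw₀ : w₀ ∉ L)
    (hc : ∑ t ∈ L.firstInBlock, c t • (moveMatrix σ₀ L).col t = 0)
    (hsingle : ∀ t ∈ L.firstInBlock, L.count (L.get t) = 1 → c t = 0) {v : Fin n}
    (hv : 2 ≤ L.count v) : ∀ t ∈ L.firstInBlock, L.get t = v → c t = 0 := by
  set K := L.firstInBlock
  have hsign : ∀ i ∈ K.filter (L.get · = v), ∑ j ∈ K.filter (L.get · = v),
      c j * (-1) ^ (L.take j).count v * (if j ≤ i then 1 else -1) = 0 := by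
    intro i hi
    obtain ⟨hiK, rfl⟩ := mem_filter.mp hi
    obtain ⟨y, hyi, hy, hcount⟩ := List.exists_separating_letter hw₀ hv
    have hyK : ∀ t ∈ K, L.get t = y → c t = 0 := by
      rcases hy with rfl | hy
      · exact fun t _ h => absurd (h ▸ L.get_mem t) hw₀
      · exact fun t ht hty => hsingle t ht (hty ▸ hy)
    rw [← sum_sign_eq_zero_of_sum_smul_col_eq_zero hσ hc hyi.symm hyK]
    refine sum_congr rfl fun j hj => ?_
    obtain ⟨hjK, hji⟩ := mem_filter.mp hj
    rw [hcount j hjK hji, pow_add]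
    split_ifs <;> ring
  intro t ht htv
  have := eq_zero_of_sum_mul_sign_eq_zero hsign t (mem_filter.mpr ⟨ht, htv⟩)
  exact (mul_eq_zero.mp this).resolve_right (pow_ne_zero _ (by norm_num))

theorem linearIndepOn_firstInBlock (hσ : isSpin σ₀) {w₀ : Fin n} (hw₀ : w₀ ∉ L) :
    LinearIndepOn ℝ (moveMatrix σ₀ L).col (L.firstInBlock : Set (Fin L.length)) := by
  rw [linearIndepOn_finset_iff]
  intro c hc
  have hsingle : ∀ t ∈ L.firstInBlock, L.count (L.get t) = 1 → c t = 0 := fun t ht hq =>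
    coeff_eq_zero_of_forall_eq hσ hw₀ hc ht fun t' _ h => L.eq_of_get_eq_of_count_eq_one hq h
  intro t ht
  rcases (Nat.one_le_iff_ne_zero.mpr (L.occurrenceIndex_lt_count t).ne_bot).eq_or_lt with h | h
  · exact hsingle t ht h.symm
  · exact firstInBlock_coeff_eq_zero_of_two_le_count hσ hw₀ hc hsingle h t ht rfl

variable {β : ℝ}

theorem sub_le_card_firstInBlock (hβ : 0 < β) (hcrit : Critical β L) {i j : ℕ}
    (hi : L.IsBlockStart i) (hj : j ≤ L.length)
    (hproper : j - i < L.length) :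
    ((j - i : ℕ) : ℝ) ≤
      (1 + β) * #{t ∈ L.firstInBlock | i ≤ Fin.val t ∧ Fin.val t < j} := by
  rcases Nat.lt_or_ge i j with hij | hij
  swap
  · rw [Nat.sub_eq_zero_of_le hij, Nat.cast_zero]; positivity
  have hlen : (seg L i j).length = j - i := by simp [seg]; omega
  have hsub : (seg L i j).toFinset ⊆
      image L.get {t ∈ L.firstInBlock | i ≤ Fin.val t ∧ Fin.val t < j} := by
    intro v hv
    obtain ⟨t₀, ht₀⟩ := exists_get_eq_of_mem_seg L hj (List.mem_toFinset.mp hv)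
    obtain ⟨t, ht, hmin⟩ := exists_min_image
      {t | i ≤ Fin.val t ∧ Fin.val t < j ∧ L.get t = v} id ⟨t₀, by simpa using ht₀⟩
    simp only [mem_filter, mem_univ, true_and, id] at ht hmin
    refine mem_image.mpr ⟨t, mem_filter.mpr ⟨?_, ht.1, ht.2.1⟩, ht.2.2⟩
    refine List.mem_firstInBlock_of_forall_ne hi ht.1 fun t' ht't hit' he => ?_
    exact absurd (hmin t' ⟨hit', by omega, he.trans ht.2.2⟩) (not_le.mpr ht't)
  calc ((j - i : ℕ) : ℝ) = (seg L i j).length := by rw [hlen]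
    _ ≤ (1 + β) * sDist (seg L i j) :=
      (hcrit.2.2 i j (List.ne_nil_of_length_pos (by omega)) (by omega)).le
    _ ≤ _ := by
      gcongr
      exact (card_le_card hsub).trans card_image_le

theorem length_sub_add_card_singletonPositions_le (hβ : 0 < β) (hcrit : Critical β L)
    (hQ : L.singletonPositions.Nonempty) (i : ℕ)
    (hi : L.IsBlockStart i) :
    ((L.length - i : ℕ) : ℝ) + β * #{t ∈ L.singletonPositions | i ≤ Fin.val t} ≤
      (1 + β) * #{t ∈ L.firstInBlock | i ≤ Fin.val t} := by
  induction hk : L.length - i using Nat.strong_induction_on generalizing i with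
  | _ k ih =>
  subst hk
  by_cases hnext : ∃ q ∈ L.singletonPositions, i ≤ Fin.val q
  · obtain ⟨q, hq, hmin⟩ := exists_min_image {t ∈ L.singletonPositions | i ≤ Fin.val t} id
      (by obtain ⟨q, hq⟩ := hnext; exact ⟨q, mem_filter.mpr hq⟩)
    simp only [mem_filter, id] at hq hmin
    have hqs : L.count (L.get q) = 1 := by simpa [List.singletonPositions] using hq.1
    have hgap := sub_le_card_firstInBlock hβ hcrit hi q.2.le (by omega)
    have hrest := ih _ (by omega) (q + 1) (Or.inr ⟨q, hqs, rfl⟩) rfl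
    have hqK : q ∈ L.firstInBlock := L.firstOccurrences_subset_firstInBlock <|
      mem_filter.mpr ⟨mem_univ q, by have := L.occurrenceIndex_lt_count q; omega⟩
    have hnone : #{t ∈ L.singletonPositions | i ≤ Fin.val t ∧ Fin.val t < q} = 0 :=
      card_eq_zero.mpr <| filter_eq_empty_iff.mpr fun t ht h => (hmin t ⟨ht, h.1⟩).not_gt h.2
    rw [card_filter_le_eq_add _ _ hq.2, Fin.card_filter_le_eq_add_one hq.1, hnone,
      card_filter_le_eq_add L.firstInBlock _ hq.2, Fin.card_filter_le_eq_add_one hqK,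
      show L.length - i = (q - i) + 1 + (L.length - (q + 1)) by omega]
    push_cast at hgap hrest ⊢
    linarith
  · simp only [not_exists, not_and, not_le] at hnext
    obtain ⟨q₀, hq₀⟩ := hQ
    have hi0 : i ≠ 0 := fun h => Nat.not_lt_zero _ (h ▸ hnext q₀ hq₀)
    have hnone : #{t ∈ L.singletonPositions | i ≤ Fin.val t} = 0 :=
      card_eq_zero.mpr <| filter_eq_empty_iff.mpr fun t ht h => (hnext t ht).not_ge h
    have hgap := sub_le_card_firstInBlock hβ hcrit hi le_rfl (by have := q₀.pos; omega)
    rw [filter_congr fun t _ => and_iff_left t.2] at hgap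
    rwa [hnone, Nat.cast_zero, mul_zero, add_zero]

theorem sDist_add_mul_sSing_le_rank (hβ : 0 < β) (hσ : isSpin σ₀) {w₀ : Fin n}
    (hw₀ : w₀ ∉ L) (hcrit : Critical β L) :
    (sDist L : ℝ) + β / (1 + β) * sSing L ≤ (moveMatrix σ₀ L).rank := by
  have hrank : (#L.firstInBlock : ℝ) ≤ (moveMatrix σ₀ L).rank := by
    exact_mod_cast card_le_rank_of_linearIndepOn (linearIndepOn_firstInBlock hσ hw₀)
  have hdist : (sDist L : ℝ) ≤ #L.firstInBlock := by
    rw [sDist, ← L.card_firstOccurrences]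
    exact_mod_cast card_le_card L.firstOccurrences_subset_firstInBlock
  have hsing : sSing L = #L.singletonPositions := L.card_singletonPositions.symm
  rcases L.singletonPositions.eq_empty_or_nonempty with hQ | hQ
  · rw [hsing, hQ, card_empty, Nat.cast_zero, mul_zero, add_zero]
    exact hdist.trans hrank
  have hcount := length_sub_add_card_singletonPositions_le hβ hcrit hQ 0 (Or.inl rfl)
  simp only [Nat.sub_zero, Nat.zero_le, filter_true] at hcount
  have hfrac : β * #L.singletonPositions / (1 + β) ≤ #L.firstInBlock - sDist L := by
    rw [div_le_iff₀ (by positivity)]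
    linarith [hcrit.2.1]
  rw [hsing, div_mul_eq_mul_div]
  linarith

end Singletons

section RepeatedLetters

variable {n : ℕ} {σ₀ : Fin n → ℝ} {L : List (Fin n)}

theorem exists_flipsBetweenFirstTwo (hnr : noRevisit L) {v : Fin n} (hv : 2 ≤ L.count v) :
    ∃ u ≠ v, L.FlipsBetweenFirstTwo v u := by
  obtain ⟨a, ha, ha0⟩ := L.exists_occurrenceIndex_eq (by omega : 0 < L.count v)
  obtain ⟨b, hb, hb1⟩ := L.exists_occurrenceIndex_eq (by omega : 1 < L.count v)
  have hab : a < b := by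
    rcases lt_trichotomy a b with h | rfl | h
    · exact h
    · omega
    · have := L.occurrenceIndex_lt_of_lt h (hb.trans ha.symm); omega
  obtain ⟨u, hu⟩ := hnr a (b + 1) (by omega) b.2
  have hseg := count_seg_add_count_take L (show (a : ℕ) ≤ b + 1 by omega) u
  rw [L.count_take_succ] at hseg
  by_cases huv : u = v
  · subst huv
    rw [if_pos hb] at hseg
    rw [List.occurrenceIndex, ha] at ha0
    rw [List.occurrenceIndex, hb] at hb1
    exact absurd ⟨1, by omega⟩ hu
  refine ⟨u, huv, a, b, ha, hb, ha0, hb1, ?_⟩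
  rw [if_neg (hb ▸ Ne.symm huv), add_zero] at hseg
  rw [← hseg, pow_add, Nat.not_even_iff_odd.mp hu |>.neg_one_pow]
  ring

theorem firstTwoOccurrences_coeff_eq_zero_of_flips (hσ : isSpin σ₀) {w₀ : Fin n}
    (hw₀ : w₀ ∉ L) {S : Finset (Fin n)} {c : Fin L.length → ℝ}
    (hc : ∑ t ∈ L.firstTwoOccurrences S, c t • (moveMatrix σ₀ L).col t = 0) {v u : Fin n}
    (hv : v ∈ S) (huv : u ≠ v) (hu : ∀ t ∈ L.firstTwoOccurrences S, L.get t = u → c t = 0)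
    (hflip : L.FlipsBetweenFirstTwo v u) :
    ∀ t ∈ L.firstTwoOccurrences S, L.get t = v → c t = 0 := by
  obtain ⟨a, b, ha, hb, ha0, hb1, hsign⟩ := hflip
  set K := L.firstTwoOccurrences S
  have hab : a ≠ b := fun h => by rw [h] at ha0; omega
  have hcols : K.filter (L.get · = v) = {a, b} := by
    ext t
    simp only [mem_filter, mem_insert, mem_singleton]
    constructor
    · rintro ⟨htK, htv⟩
      rcases (mem_filter.mp htK).2 with h | h
      · exact Or.inl (L.eq_of_occurrenceIndex_eq (htv.trans ha.symm) (h.trans ha0.symm))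
      · exact Or.inr (L.eq_of_occurrenceIndex_eq (htv.trans hb.symm) (h.1.trans hb1.symm))
    · rintro (rfl | rfl)
      · exact ⟨mem_filter.mpr ⟨mem_univ _, Or.inl ha0⟩, ha⟩
      · exact ⟨mem_filter.mpr ⟨mem_univ _, Or.inr ⟨hb1, hb ▸ hv⟩⟩, hb⟩
  have hcount₀ : ∀ j : ℕ, (L.take j).count w₀ = 0 :=
    fun j => List.count_eq_zero.mpr fun h => hw₀ (List.mem_of_mem_take h)
  have hvw₀ := sum_sign_eq_zero_of_sum_smul_col_eq_zero hσ hc (x := v)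
    (fun h : v = w₀ => hw₀ (h ▸ ha ▸ L.get_mem a))
    fun t _ (h : L.get t = w₀) => absurd (h ▸ L.get_mem t) hw₀
  have hvu := sum_sign_eq_zero_of_sum_smul_col_eq_zero hσ hc huv.symm hu
  rw [hcols, sum_pair hab] at hvw₀ hvu
  simp only [List.occurrenceIndex, ha, hb] at ha0 hb1
  rw [ha0, hb1, hcount₀, hcount₀] at hvw₀
  rw [ha0, hb1, pow_add, pow_add, hsign] at hvu
  have hca : c a = 0 := by
    have : (c a + c b) * (-1) ^ (L.take a).count u = 0 := by linear_combination hvu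
    have := (mul_eq_zero.mp this).resolve_right (pow_ne_zero _ (by norm_num))
    linear_combination (this + hvw₀) / 2
  have hcb : c b = 0 := by linear_combination hca - hvw₀
  intro t ht htv
  have htab := (Finset.ext_iff.mp hcols t).mp (mem_filter.mpr ⟨ht, htv⟩)
  rw [mem_insert, mem_singleton] at htab
  rcases htab with rfl | rfl
  exacts [hca, hcb]

theorem linearIndepOn_firstTwoOccurrences (hσ : isSpin σ₀) {w₀ : Fin n} (hw₀ : w₀ ∉ L)
    {S : Finset (Fin n)} {r : Fin n → Fin n → Prop} (hr : WellFounded r)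
    (hS : ∀ v ∈ S, ∃ u ≠ v, (u ∈ S → r u v) ∧ L.FlipsBetweenFirstTwo v u) :
    LinearIndepOn ℝ (moveMatrix σ₀ L).col (L.firstTwoOccurrences S : Set (Fin L.length)) := by
  rw [linearIndepOn_finset_iff]
  intro c hc
  set K := L.firstTwoOccurrences S
  have hout : ∀ v ∉ S, ∀ t ∈ K, L.get t = v → c t = 0 := by
    intro v hv t ht htv
    have hfirst : ∀ t' ∈ K, L.get t' = v → L.occurrenceIndex t' = 0 := fun t' ht' ht'v =>
      (mem_filter.mp ht').2.resolve_right fun h => hv (ht'v ▸ h.2)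
    refine coeff_eq_zero_of_forall_eq hσ hw₀ hc ht fun t' ht' he => ?_
    exact L.eq_of_occurrenceIndex_eq he
      ((hfirst t' ht' (he.trans htv)).trans (hfirst t ht htv).symm)
  have hall : ∀ v, ∀ t ∈ K, L.get t = v → c t = 0 := by
    intro v
    induction v using hr.induction with
    | _ v ih =>
      by_cases hv : v ∈ S
      · obtain ⟨u, huv, hrel, hflip⟩ := hS v hv
        refine firstTwoOccurrences_coeff_eq_zero_of_flips hσ hw₀ hc hv huv ?_ hflip
        by_cases huS : u ∈ S
        exacts [ih u (hrel huS), hout u huS]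
      · exact hout v hv
  exact fun t ht => hall _ t ht rfl

theorem sDist_add_sRep_div_two_le_rank (hσ : isSpin σ₀) {w₀ : Fin n} (hw₀ : w₀ ∉ L)
    (hnr : noRevisit L) :
    (sDist L : ℝ) + sRep L / 2 ≤ (moveMatrix σ₀ L).rank := by
  set R := L.toFinset.filter fun v => 2 ≤ L.count v
  have hR : ∀ v ∈ R, 2 ≤ L.count v := fun v hv => (mem_filter.mp hv).2
  choose! f hf using fun v (hv : v ∈ R) => exists_flipsBetweenFirstTwo hnr (hR v hv)
  have hbound : ∀ S ⊆ R, ∀ r : Fin n → Fin n → Prop, WellFounded r →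
      (∀ v ∈ S, r (f v) v) →
        ((sDist L + #S : ℕ) : ℝ) ≤ (moveMatrix σ₀ L).rank := by
    intro S hSR r hr hrS
    have hind := linearIndepOn_firstTwoOccurrences hσ hw₀ hr
      fun v hv => ⟨f v, (hf v (hSR hv)).1, fun _ => hrS v hv, (hf v (hSR hv)).2⟩
    rw [sDist, ← L.card_firstTwoOccurrences fun v hv => hR v (hSR hv)]
    exact_mod_cast card_le_rank_of_linearIndepOn hind
  -- The two orientations of `v ↦ f v` split the repeated letters.
  have hdown := hbound (R.filter fun v => f v < v) (filter_subset _ _) (· < ·)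
    wellFounded_lt fun v hv => (mem_filter.mp hv).2
  have hup := hbound (R.filter fun v => ¬ f v < v) (filter_subset _ _) (· > ·)
    wellFounded_gt fun v hv => lt_of_le_of_ne (not_lt.mp (mem_filter.mp hv).2)
      (hf v (mem_filter.mp hv).1).1.symm
  have hsplit := R.card_filter_add_card_filter_not fun v => f v < v
  rw [show sRep L = #R from rfl, ← hsplit]
  push_cast at hdown hup ⊢
  linarith

end RepeatedLetters

theorem sSing_add_sRep {n : ℕ} (L : List (Fin n)) : sSing L + sRep L = sDist L := by
  have h := L.toFinset.card_filter_add_card_filter_not fun v => L.count v = 1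
  rwa [filter_congr fun v hv => show ¬L.count v = 1 ↔ 2 ≤ L.count v by
    have := List.count_pos_iff.mpr (List.mem_toFinset.mp hv); omega] at h

/-- Lemma 4.2 / Corollary 4.3: a `β`-critical flip sequence `B` on `K_n` with `s(B) < n`
which does not revisit any state satisfies `rank(A_B) ≥ s(B) + (β/(1+β)) s₁(B)`, and
consequently `rank(A_B) ≥ ((1+4β)/(1+3β)) s(B)`. -/
theorem stmt8 (n : ℕ) (β : ℝ) (hβ : 0 < β) (B : List (Fin n))
    (σ₀ : Fin n → ℝ) (h : isSpin σ₀)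
    (hs : sDist B < n) (hnr : noRevisit B) (hcrit : Critical β B) :
    (sDist B : ℝ) + β / (1 + β) * (sSing B : ℝ) ≤ ((moveMatrix σ₀ B).rank : ℝ) ∧
    (1 + 4 * β) / (1 + 3 * β) * (sDist B : ℝ) ≤ ((moveMatrix σ₀ B).rank : ℝ) := by
  obtain ⟨w₀, -, hw₀⟩ := exists_mem_notMem_of_card_lt_card
    (s := B.toFinset) (t := univ) (by simpa [sDist] using hs)
  rw [List.mem_toFinset] at hw₀
  have hA := sDist_add_mul_sSing_le_rank hβ h hw₀ hcrit
  have hB := sDist_add_sRep_div_two_le_rank h hw₀ hnr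
  refine ⟨hA, ?_⟩
  have hA' : (1 + β) * sDist B + β * sSing B ≤ (1 + β) * (moveMatrix σ₀ B).rank := by
    have := mul_le_mul_of_nonneg_left hA (by positivity : (0 : ℝ) ≤ 1 + β)
    rwa [mul_add, ← mul_assoc, mul_div_cancel₀ _ (by positivity)] at this
  have hsum : (sSing B : ℝ) + sRep B = sDist B := by exact_mod_cast sSing_add_sRep B
  rw [div_mul_eq_mul_div, div_le_iff₀ (by positivity)]
  nlinarith [mul_le_mul_of_nonneg_left hB (by positivity : (0 : ℝ) ≤ 2 * β)]
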